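/- Let H be a Noetherian group, and let G be a group with a surjective group homomorphism φ : G → H whose kernel is contained in the center of G (i.e., G is a central extension of H). Then the derived series term Γₙ(G) is finitely generated for every n ≥ 2. -/

import Mathlib

/-!
For `K ≤ G`, lifting finitely many generators of `φ(K) ≤ H` gives a finitely generated `U ≤ K`
with `K ≤ U · ker φ`, and since `ker φ` is central, `⁅K, K⁆ = ⁅U, U⁆`. So it suffices to show that
`K = [G, G]` is finitely generated when `G` is. Again `K ≤ ⟨T⟩ · (K ∩ ker φ)` with `T` finite,
and centrality gives `N := [K, K] ≤ ⟨T⟩`. In the finitely generated metabelian group `G/N`, the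
image of `K ∩ ker φ` is a central subgroup of the derived subgroup `K/N`. By P. Hall's argument
it is finitely generated: `K/N` is a finitely generated module over the commutative Noetherian
ring generated by the conjugation action of `G/N`, and its submodules are exactly the normal
subgroups of `G/N` inside `K/N`. Lifting its generators to a finite `W ⊆ K ∩ ker φ` gives
`K = ⟨T ∪ W⟩`.
-/

/-- A group is *Noetherian* if every subgroup is finitely generated. -/
def IsNoetherianGroup (G : Type*) [Group G] : Prop := ∀ K : Subgroup G, K.FG

open scoped commutatorElement
open Subgroup

section Group

variable {G H : Type*} [Group G] [Group H]

theorem commutatorElement_mul_mul_of_mem_center {g h z w : G} (hz : z ∈ center G)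
    (hw : w ∈ center G) : ⁅g * z, h * w⁆ = ⁅g, h⁆ := by
  have hz1 : ⁅z, h * w⁆ = 1 :=
    commutatorElement_eq_one_iff_mul_comm.mpr (mem_center_iff.mp hz _).symm
  have hw1 : ⁅g, w⁆ = 1 := commutatorElement_eq_one_iff_mul_comm.mpr (mem_center_iff.mp hw g)
  rw [commutatorElement_mul_left_eq_conj_mul, hz1, commutatorElement_mul_right_eq_mul_conj, hw1]
  group

theorem Subgroup.commutator_sup_center (U V : Subgroup G) :
    ⁅U ⊔ center G, V ⊔ center G⁆ = ⁅U, V⁆ := by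
  refine le_antisymm ?_ (commutator_mono le_sup_left le_sup_left)
  rw [commutator_le]
  intro g hg h hh
  obtain ⟨u, hu, z, hz, rfl⟩ := mem_sup_of_normal_right.mp hg
  obtain ⟨v, hv, w, hw, rfl⟩ := mem_sup_of_normal_right.mp hh
  rw [commutatorElement_mul_mul_of_mem_center hz hw]
  exact commutator_mem_commutator hu hv

theorem Subgroup.normal_of_le_center {K : Subgroup G} (hK : K ≤ center G) : K.Normal where
  conj_mem n hn g := by
    rw [mem_center_iff.mp (hK hn) g, mul_inv_cancel_right]
    exact hn

theorem Subgroup.map_center_le_center {f : G →* H} (hf : Function.Surjective f) :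
    (center G).map f ≤ center H := by
  rintro _ ⟨z, hz, rfl⟩
  refine mem_center_iff.mpr fun h => ?_
  obtain ⟨g, rfl⟩ := hf h
  rw [← map_mul, ← map_mul, mem_center_iff.mp hz g]

theorem Subgroup.FG.map {K : Subgroup G} (hK : K.FG) (f : G →* H) : (K.map f).FG := by
  classical
  obtain ⟨S, rfl⟩ := hK
  exact ⟨S.image f, by rw [Finset.coe_image, MonoidHom.map_closure]⟩

theorem Subgroup.exists_finset_le_closure_sup_inf_ker {f : G →* H} {K : Subgroup G}
    (hK : (K.map f).FG) : ∃ T : Finset G, (T : Set G) ⊆ K ∧ K ≤ closure T ⊔ (K ⊓ f.ker) := by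
  classical
  obtain ⟨Y, hY⟩ := hK
  have hYK : (Y : Set H) ⊆ f '' K := by rw [← coe_map, ← hY]; exact subset_closure
  obtain ⟨T, hTK, rfl⟩ := Finset.subset_set_image_iff.mp hYK
  refine ⟨T, hTK, fun k hk => ?_⟩
  have hfk : f k ∈ (closure (T : Set G)).map f := by
    rw [MonoidHom.map_closure, ← Finset.coe_image, hY]
    exact mem_map_of_mem f hk
  obtain ⟨u, hu, hfu⟩ := hfk
  have huK : u ∈ K := (closure_le K).mpr hTK hu
  rw [← mul_inv_cancel_left u k]
  refine mul_mem_sup hu ⟨K.mul_mem (K.inv_mem huK) hk, ?_⟩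
  simp [hfu]

theorem commutator_eq_normalClosure_of_closure_eq_top {S : Set G} (hS : closure S = ⊤) :
    commutator G = normalClosure (Set.image2 (⁅·, ·⁆) S S) := by
  set N := normalClosure (Set.image2 (⁅·, ·⁆) S S)
  refine le_antisymm (Normal.quotient_commutative_iff_commutator_le.mp ?_)
    (normalClosure_le_normal ?_)
  · have hgen : closure (QuotientGroup.mk' N '' S) = ⊤ := by
      rw [← MonoidHom.map_closure, hS, map_top_of_surjective _ (QuotientGroup.mk'_surjective N)]
    have hcomm : ∀ x ∈ QuotientGroup.mk' N '' S, ∀ y ∈ QuotientGroup.mk' N '' S,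
        x * y = y * x := by
      rintro _ ⟨a, ha, rfl⟩ _ ⟨b, hb, rfl⟩
      rw [← commutatorElement_eq_one_iff_mul_comm, ← map_commutatorElement,
        QuotientGroup.mk'_apply, QuotientGroup.eq_one_iff]
      exact subset_normalClosure (Set.mem_image2_of_mem ha hb)
    have := isMulCommutative_closure hcomm
    refine ⟨⟨fun x y => ?_⟩⟩
    have hx : x ∈ closure (QuotientGroup.mk' N '' S) := hgen ▸ mem_top x
    have hy : y ∈ closure (QuotientGroup.mk' N '' S) := hgen ▸ mem_top y
    exact congrArg Subtype.val (mul_comm' (⟨x, hx⟩ : Subgroup.closure _) ⟨y, hy⟩)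
  · rintro _ ⟨a, -, b, -, rfl⟩
    exact commutator_mem_commutator (mem_top a) (mem_top b)

end Group

open scoped IsMulCommutative in
theorem Subalgebra.isNoetherianRing_of_fg {R A : Type*} [CommRing R] [IsNoetherianRing R]
    [Ring A] [Algebra R A] {S : Subalgebra R A} [IsMulCommutative S] (hS : S.FG) :
    IsNoetherianRing S := by
  have := (Subalgebra.fg_iff_finiteType S).mp hS
  exact Algebra.FiniteType.isNoetherianRing R S

theorem Algebra.adjoin_range_fg {R A P : Type*} [CommSemiring R] [Semiring A] [Algebra R A]
    [Monoid P] [Monoid.FG P] (f : P →* A) : (Algebra.adjoin R (Set.range f)).FG := by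
  classical
  obtain ⟨S, hS⟩ := Monoid.FG.fg_top (M := P)
  refine ⟨S.image f, le_antisymm (Algebra.adjoin_mono ?_) (Algebra.adjoin_le ?_)⟩
  · rw [Finset.coe_image]
    exact Set.image_subset_range _ _
  · rintro _ ⟨p, rfl⟩
    have hp : p ∈ Submonoid.closure (S : Set P) := hS ▸ Submonoid.mem_top p
    refine (Submonoid.closure_le (S := (Algebra.adjoin R _).toSubmonoid.comap f)).mpr ?_ hp
    exact fun x hx => Algebra.subset_adjoin (by rw [Finset.coe_image]; exact ⟨x, hx, rfl⟩)

theorem AddSubgroup.apply_mem_of_mem_adjoin {V : Type*} [AddCommGroup V]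
    {s : Set (Module.End ℤ V)} (t : AddSubgroup V) (ht : ∀ f ∈ s, ∀ v ∈ t, f v ∈ t)
    {a : Module.End ℤ V} (ha : a ∈ Algebra.adjoin ℤ s) {v : V} (hv : v ∈ t) : a v ∈ t := by
  induction ha using Algebra.adjoin_induction generalizing v with
  | mem f hf => exact ht f hf v hv
  | algebraMap n => rw [Module.algebraMap_end_apply]; exact t.zsmul_mem hv n
  | add a b _ _ iha ihb => exact t.add_mem (iha hv) (ihb hv)
  | mul a b _ _ iha ihb => exact iha (ihb hv)

section ConjRepresentation

open scoped IsMulCommutative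

variable {P : Type*} [Group P] (M : Subgroup P) [M.Normal] [IsMulCommutative M]

noncomputable def Subgroup.conjRepresentation : Representation ℤ P (Additive M) :=
  letI := MulDistribMulAction.compHom M (MulAut.conjNormal (H := M))
  Representation.ofMulDistribMulAction P M

theorem Subgroup.coe_toMul_conjRepresentation_apply (g : P) (v : Additive M) :
    ((M.conjRepresentation g v).toMul : P) = g * v.toMul * g⁻¹ :=
  MulAut.conjNormal_apply g _

theorem Subgroup.conjRepresentation_eq_one_of_mem {m : P} (hm : m ∈ M) :
    M.conjRepresentation m = 1 := by
  refine LinearMap.ext fun v => Additive.toMul.injective (Subtype.ext ?_)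
  have hmv : m * v.toMul = v.toMul * m := congrArg Subtype.val (mul_comm' (⟨m, hm⟩ : M) v.toMul)
  rw [coe_toMul_conjRepresentation_apply, hmv, mul_inv_cancel_right]
  rfl

theorem Subgroup.conjRepresentation_commute (hPM : _root_.commutator P ≤ M) (g h : P) :
    Commute (M.conjRepresentation g) (M.conjRepresentation h) := by
  have hgh : g * h = ⁅g, h⁆ * (h * g) := by group
  rw [Commute, SemiconjBy, ← map_mul, ← map_mul, hgh, map_mul,
    M.conjRepresentation_eq_one_of_mem (hPM (commutator_mem_commutator (mem_top g) (mem_top h))),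
    one_mul]

noncomputable abbrev Subgroup.conjAlgebra : Subalgebra ℤ (Module.End ℤ (Additive M)) :=
  Algebra.adjoin ℤ (Set.range M.conjRepresentation)

theorem Subgroup.conjRepresentation_mem_conjAlgebra (g : P) :
    M.conjRepresentation g ∈ M.conjAlgebra :=
  Algebra.subset_adjoin ⟨g, rfl⟩

noncomputable def Subgroup.conjSubmodule (L : Subgroup P) [L.Normal] :
    Submodule M.conjAlgebra (Additive M) where
  toAddSubmonoid := (L.subgroupOf M).toAddSubgroup.toAddSubmonoid
  smul_mem' a v hv := by
    refine (L.subgroupOf M).toAddSubgroup.apply_mem_of_mem_adjoin ?_ a.2 hv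
    rintro _ ⟨g, rfl⟩ w hw
    show ((M.conjRepresentation g w).toMul : P) ∈ L
    rw [coe_toMul_conjRepresentation_apply]
    exact Normal.conj_mem ‹_› _ hw g

theorem Subgroup.mem_conjSubmodule {L : Subgroup P} [L.Normal] {v : Additive M} :
    v ∈ M.conjSubmodule L ↔ (v.toMul : P) ∈ L :=
  Iff.rfl

noncomputable def Subgroup.ofConjSubmodule (W : Submodule M.conjAlgebra (Additive M)) :
    Subgroup P :=
  (AddSubgroup.toSubgroup' W.toAddSubgroup).map M.subtype

instance Subgroup.ofConjSubmodule_normal (W : Submodule M.conjAlgebra (Additive M)) :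
    (M.ofConjSubmodule W).Normal where
  conj_mem := by
    rintro _ ⟨m, hm, rfl⟩ g
    refine ⟨(M.conjRepresentation g (.ofMul m)).toMul, ?_, coe_toMul_conjRepresentation_apply M g _⟩
    exact W.smul_mem ⟨_, M.conjRepresentation_mem_conjAlgebra g⟩ hm

theorem Subgroup.conjAlgebra_moduleFinite {T : Set P} (hT : T.Finite)
    (hTM : normalClosure T = M) : Module.Finite M.conjAlgebra (Additive M) := by
  set X : Set (Additive M) := {v | (v.toMul : P) ∈ T}
  have hX : X.Finite :=
    hT.preimage (M.subtype_injective.comp Additive.toMul.injective).injOn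
  refine ⟨⟨hX.toFinset, eq_top_iff.mpr fun v _ => ?_⟩⟩
  have hTW : T ⊆ M.ofConjSubmodule (Submodule.span M.conjAlgebra hX.toFinset) := fun p hp =>
    have hpM : p ∈ M := hTM ▸ subset_normalClosure hp
    ⟨⟨p, hpM⟩, Submodule.subset_span (a := Additive.ofMul (⟨p, hpM⟩ : M)) (by simpa [X] using hp),
      rfl⟩
  have hMW := normalClosure_le_normal hTW
  rw [hTM] at hMW
  obtain ⟨m, hm, hmv⟩ := hMW v.toMul.2
  rwa [show m = v.toMul from Subtype.ext hmv] at hm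

/-- P. Hall: finitely generated metabelian groups satisfy the maximal condition on normal
subgroups. -/
theorem Subgroup.exists_finset_normalClosure_eq [Group.FG P] (hPM : _root_.commutator P ≤ M)
    {T : Set P} (hT : T.Finite) (hTM : normalClosure T = M) (L : Subgroup P) [L.Normal]
    (hLM : L ≤ M) : ∃ Y : Finset P, normalClosure (Y : Set P) = L := by
  classical
  have : IsMulCommutative M.conjAlgebra := Algebra.isMulCommutative_adjoin ℤ <| by
    rintro _ ⟨g, rfl⟩ _ ⟨h, rfl⟩
    exact (M.conjRepresentation_commute hPM g h).eq
  have : IsNoetherianRing M.conjAlgebra :=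
    Subalgebra.isNoetherianRing_of_fg (Algebra.adjoin_range_fg _)
  have := M.conjAlgebra_moduleFinite hT hTM
  obtain ⟨Y, hY⟩ := IsNoetherian.noetherian (M.conjSubmodule L)
  set Y' := Y.image fun v => (v.toMul : P)
  refine ⟨Y', le_antisymm (normalClosure_le_normal ?_) fun p hp => ?_⟩
  · intro p hp
    obtain ⟨v, hv, rfl⟩ := Finset.mem_image.mp hp
    exact M.mem_conjSubmodule.mp (hY ▸ Submodule.subset_span hv)
  · have hle : M.conjSubmodule L ≤ M.conjSubmodule (normalClosure Y') :=
      hY ▸ Submodule.span_le.mpr fun v hv => subset_normalClosure (Finset.mem_image_of_mem _ hv)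
    exact hle (show Additive.ofMul ⟨p, hLM hp⟩ ∈ M.conjSubmodule L from hp)

end ConjRepresentation

theorem Subgroup.fg_of_le_commutator_of_le_center {P : Type*} [Group P] [Group.FG P]
    [IsMulCommutative (_root_.commutator P)] {B : Subgroup P} (hBM : B ≤ _root_.commutator P)
    (hBZ : B ≤ center P) : B.FG := by
  obtain ⟨S, hS⟩ := Group.FG.out (G := P)
  have := normal_of_le_center hBZ
  obtain ⟨Y, hY⟩ := exists_finset_normalClosure_eq (_root_.commutator P) le_rfl
    (S.finite_toSet.image2 _ S.finite_toSet) (commutator_eq_normalClosure_of_closure_eq_top hS).symm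
    B hBM
  have hYZ : closure (Y : Set P) ≤ center P :=
    (closure_le _).mpr ((subset_normalClosure.trans hY.le).trans hBZ)
  have := normal_of_le_center hYZ
  refine ⟨Y, le_antisymm (hY ▸ closure_le_normalClosure) ?_⟩
  exact hY ▸ normalClosure_le_normal subset_closure

section CentralExtension

variable {G H : Type*} [Group G] [Group H]

theorem commutator_fg_of_map_fg [Group.FG G] (φ : G →* H) (hker : φ.ker ≤ center G)
    (hK : ((commutator G).map φ).FG) : (commutator G).FG := by
  classical
  set N := ⁅commutator G, commutator G⁆
  set A := commutator G ⊓ φ.ker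
  obtain ⟨T, hTK, hKT⟩ := exists_finset_le_closure_sup_inf_ker hK
  set U := Subgroup.closure (T : Set G)
  have hKTZ : commutator G ≤ U ⊔ center G :=
    hKT.trans (sup_le_sup_left (inf_le_right.trans hker) _)
  have hNT : N ≤ U := calc
    N ≤ ⁅U ⊔ center G, U ⊔ center G⁆ := commutator_mono hKTZ hKTZ
    _ = ⁅U, U⁆ := commutator_sup_center U U
    _ ≤ U := commutator_le_self U
  have hmapK : (commutator G).map (QuotientGroup.mk' N) = commutator (G ⧸ N) := by
    rw [map_commutator_eq, QuotientGroup.range_mk']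
    exact (_root_.commutator_def _).symm
  have : IsMulCommutative (commutator (G ⧸ N)) := by
    rw [← commutator_self_eq_bot_iff, ← hmapK, ← map_commutator, QuotientGroup.map_mk'_self]
  have hB : (A.map (QuotientGroup.mk' N)).FG := fg_of_le_commutator_of_le_center
    (hmapK ▸ map_mono inf_le_left)
    ((map_mono (inf_le_right.trans hker)).trans
      (map_center_le_center (QuotientGroup.mk'_surjective N)))
  obtain ⟨W, hWA, hAW⟩ := exists_finset_le_closure_sup_inf_ker hB
  set V := Subgroup.closure (W : Set G)
  rw [QuotientGroup.ker_mk'] at hAW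
  refine ⟨T ∪ W, le_antisymm ((closure_le _).mpr ?_) ?_⟩
  · rw [Finset.coe_union]
    exact Set.union_subset hTK (hWA.trans inf_le_left)
  · rw [Finset.coe_union, Subgroup.closure_union]
    calc commutator G ≤ U ⊔ A := hKT
      _ ≤ U ⊔ (V ⊔ N) := sup_le_sup_left (hAW.trans (sup_le_sup_left inf_le_right _)) _
      _ ≤ U ⊔ V := sup_le le_sup_left (sup_le le_sup_right (hNT.trans le_sup_left))

theorem Subgroup.commutator_fg_of_ker_le_center (φ : G →* H) (hker : φ.ker ≤ center G)
    (hH : IsNoetherianGroup H) (K : Subgroup G) : ⁅K, K⁆.FG := by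
  obtain ⟨T, hTK, hKT⟩ := exists_finset_le_closure_sup_inf_ker (hH (K.map φ))
  set U := Subgroup.closure (T : Set G)
  have hKU : ⁅K, K⁆ = ⁅U, U⁆ := by
    have hKUZ : K ≤ U ⊔ center G := hKT.trans (sup_le_sup_left (inf_le_right.trans hker) _)
    refine le_antisymm ?_ (commutator_mono ((closure_le K).mpr hTK) ((closure_le K).mpr hTK))
    exact (commutator_mono hKUZ hKUZ).trans (commutator_sup_center U U).le
  have hkerU : (φ.comp U.subtype).ker ≤ center U := fun z hz =>
    mem_center_iff.mpr fun g => Subtype.ext (mem_center_iff.mp (hker hz) g)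
  rw [hKU, ← map_subtype_commutator]
  exact (commutator_fg_of_map_fg (φ.comp U.subtype) hkerU (hH _)).map U.subtype

end CentralExtension

/-- `Γₙ = derivedSeries G (n - 1)`, since Mathlib's derived series starts at index `0`. -/
theorem derivedSeries_fg_of_central_extension_of_noetherian_general
    {G H : Type*} [Group G] [Group H] (φ : G →* H)
    (hker : φ.ker ≤ Subgroup.center G)
    (hH : IsNoetherianGroup H) :
    ∀ n : ℕ, 2 ≤ n → (derivedSeries G (n - 1)).FG := by
  intro n hn
  obtain ⟨k, rfl⟩ := Nat.exists_eq_add_of_le' hn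
  rw [show k + 2 - 1 = k + 1 by omega, derivedSeries_succ]
  exact commutator_fg_of_ker_le_center φ hker hH _

/-- Let `H` be a Noetherian group and `G` a central extension of `H`. Then the derived series
term `Γₙ(G)` is finitely generated for every `n ≥ 2`.
(Here `Γₙ = derivedSeries · (n - 1)`, since Mathlib's derived series starts at index `0`.) -/
theorem derivedSeries_fg_of_central_extension_of_noetherian
    {G H : Type*} [Group G] [Group H] (φ : G →* H)
    (hsurj : Function.Surjective φ) (hker : φ.ker ≤ Subgroup.center G)
    (hH : IsNoetherianGroup H) :
    ∀ n : ℕ, 2 ≤ n → (derivedSeries G (n - 1)).FG :=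
  derivedSeries_fg_of_central_extension_of_noetherian_general φ hker hH
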